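/- arXiv:1603.04098 — 9 statements merged into one kernel-verified Lean document; each statement's English description precedes it below -/
import Mathlib

section
/- Consider the bi-virus ODE system ẋ¹_i = -δ¹_i x¹_i + (1 - x¹_i - x²_i) Σ_j β¹_{ij} x¹_j, ẋ²_i = -δ²_i x²_i + (1 - x¹_i - x²_i) Σ_j β²_{ij} x²_j for i ∈ [n], with δ¹_i, δ²_i ≥ 0 and β¹_{ij}, β²_{ij} ≥ 0. The set D = {(x¹, x²) : x¹ ≥ 0, x² ≥ 0, x¹ + x² ≤ 1 componentwise} is forward invariant: if (x¹(0), x²(0)) ∈ D then (x¹(t), x²(t)) ∈ D for all t ≥ 0. -/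
/-- Irreducibility of a square matrix: the directed graph with an edge from `j` to `i`
whenever `M i j > 0` is strongly connected. -/
def Irred {n : ℕ} (M : Matrix (Fin n) (Fin n) ℝ) : Prop :=
  ∀ i j : Fin n, ∃ (m : ℕ) (c : ℕ → Fin n), c 0 = j ∧ c m = i ∧
    ∀ k < m, 0 < M (c (k + 1)) (c k)

/-- Spectral abscissa: largest real part of a (complex) eigenvalue. -/
noncomputable def spA {n : ℕ} (M : Matrix (Fin n) (Fin n) ℝ) : ℝ :=
  sSup ((fun z : ℂ => z.re) '' spectrum ℂ (M.map (fun x : ℝ => (x : ℂ))))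

/-- Spectral radius: largest modulus of a (complex) eigenvalue. -/
noncomputable def spR {n : ℕ} (M : Matrix (Fin n) (Fin n) ℝ) : ℝ :=
  sSup ((fun z : ℂ => ‖z‖) '' spectrum ℂ (M.map (fun x : ℝ => (x : ℂ))))

/-!
Measure the distance from `D` by `V(t)`, the maximum of `0` and of the violations of the
constraints `-x¹ᵢ ≤ 0`, `-x²ᵢ ≤ 0`, `x¹ᵢ + x²ᵢ - 1 ≤ 0`. While `V < 1` the state is bounded, and the
derivative of every constraint realising the maximum is at most `K V` for a constant `K` built from
the rates: each term of the vector field that pushes the state out of `D` carries a factor that is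
itself a violation. Hence the upper right Dini derivative of `V` is at most `K V`, Grönwall's
inequality keeps `V ≤ 0` for a while after any time where `V ≤ 0`, and continuous induction
from `V(0) ≤ 0` gives `V ≤ 0` for all `t ≥ 0`.
-/

open Filter Set Topology

theorem eventually_slope_finset_sup'_lt {ι : Type*} {s : Finset ι} (hs : s.Nonempty)
    {g : ι → ℝ → ℝ} {g' : ι → ℝ} {x r : ℝ} (hg : ∀ k ∈ s, HasDerivAt (g k) (g' k) x)
    (hr : ∀ k ∈ s, g k x = s.sup' hs (g · x) → g' k < r) :
    ∀ᶠ z in 𝓝[>] x, slope (fun z ↦ s.sup' hs (g · z)) x z < r := by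
  set V := s.sup' hs (g · x)
  have hbound : ∀ k ∈ s, ∀ᶠ z in 𝓝[>] x, g k z < V + r * (z - x) := by
    intro k hk
    rcases (s.le_sup' (g · x) hk).eq_or_lt with hactive | hinactive
    · have hslope : ∀ᶠ z in 𝓝[>] x, slope (g k) x z < r :=
        (((hasDerivAt_iff_tendsto_slope.1 (hg k hk)).mono_left
          (nhdsGT_le_nhdsNE x)).eventually_lt_const (hr k hk hactive))
      filter_upwards [hslope, self_mem_nhdsWithin] with z hz (hxz : x < z)
      rw [slope_def_field, div_lt_iff₀ (sub_pos.2 hxz)] at hz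
      linarith
    · have hline : Tendsto (fun z ↦ V + r * (z - x)) (𝓝[>] x) (𝓝 V) := by
        have hcont : Continuous fun z ↦ V + r * (z - x) := by fun_prop
        simpa using (hcont.tendsto x).mono_left nhdsWithin_le_nhds
      exact ((hg k hk).continuousAt.tendsto.mono_left nhdsWithin_le_nhds).eventually_lt
        hline hinactive
  filter_upwards [(eventually_all_finset s).2 hbound, self_mem_nhdsWithin]
    with z hz (hxz : x < z)
  rw [slope_def_field, div_lt_iff₀ (sub_pos.2 hxz)]
  have : s.sup' hs (g · z) < V + r * (z - x) := (Finset.sup'_lt_iff hs).2 hz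
  linarith

theorem nonpos_of_frequently_slope_lt {V : ℝ → ℝ} {a ε K : ℝ} (hV : Continuous V)
    (hε : 0 < ε)
    (hslope : ∀ t ≥ a, V t < ε → ∀ r, K * V t < r → ∃ᶠ z in 𝓝[>] t, slope V t z < r)
    (ha : V a ≤ 0) : ∀ t ≥ a, V t ≤ 0 := by
  have hlocal : ∀ s ≥ a, V s ≤ 0 → ∃ b > s, ∀ t ∈ Icc s b, V t ≤ 0 := by
    intro s hs hVs
    have hnear : ∀ᶠ t in 𝓝[≥] s, V t < ε :=
      (hV.continuousAt.eventually_lt_const (hVs.trans_lt hε)).filter_mono nhdsWithin_le_nhds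
    obtain ⟨b, hsb, hsmall⟩ := mem_nhdsGE_iff_exists_Icc_subset.1 hnear
    refine ⟨b, hsb, fun t ht ↦ ?_⟩
    have := le_gronwallBound_of_liminf_deriv_right_le (f' := fun t ↦ K * V t) (ε := 0)
      hV.continuousOn
      (fun t ht r hr ↦ hslope t (hs.trans ht.1) (hsmall (Ico_subset_Icc_self ht)) r hr)
      hVs (fun t _ ↦ (add_zero _).ge) t ht
    rwa [gronwallBound_ε0_δ0] at this
  intro t ht
  refine IsClosed.Icc_subset_of_forall_exists_gt
    ((isClosed_le hV continuous_const).inter isClosed_Icc) ha ?_ ⟨ht, le_rfl⟩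
  rintro s ⟨hVs, hs, -⟩ y hsy
  obtain ⟨b, hsb, hb⟩ := hlocal s hs hVs
  exact ⟨min b y, hb _ ⟨(lt_min hsb hsy).le, min_le_left _ _⟩, lt_min hsb hsy, min_le_right _ _⟩

theorem nonpos_of_active_deriv_le_mul {ι : Type*} [Fintype ι] {g g' : ι → ℝ → ℝ} {a ε K : ℝ}
    (hε : 0 < ε) (hg : ∀ k t, HasDerivAt (g k) (g' k t) t)
    (hactive : ∀ t ≥ a, (∀ j, g j t < ε) → ∀ k, 0 ≤ g k t → (∀ j, g j t ≤ g k t) →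
      g' k t ≤ K * g k t)
    (ha : ∀ k, g k a ≤ 0) : ∀ t ≥ a, ∀ k, g k t ≤ 0 := by
  -- the index `none` adds the constant `0`, so that the largest violation `V` is nonnegative
  let h : Option ι → ℝ → ℝ := fun k ↦ k.elim 0 g
  let h' : Option ι → ℝ → ℝ := fun k t ↦ k.elim 0 (g' · t)
  have hh : ∀ k t, HasDerivAt (h k) (h' k t) t := by
    rintro (_ | k) t
    exacts [hasDerivAt_const t 0, hg k t]
  let V : ℝ → ℝ := fun t ↦ Finset.univ.sup' Finset.univ_nonempty (h · t)
  have le_V : ∀ k t, h k t ≤ V t := fun k t ↦ Finset.le_sup' (h · t) (Finset.mem_univ k)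
  have hV : Continuous V :=
    Continuous.finset_sup'_apply _ fun k _ ↦ continuous_iff_continuousAt.2 fun t ↦
      (hh k t).continuousAt
  have hactiveV : ∀ t ≥ a, V t < ε → ∀ k, h k t = V t → h' k t ≤ K * V t := by
    rintro t ht hVε (_ | k) hk
    · simp [h', ← hk, h]
    · change g k t = V t at hk
      change g' k t ≤ K * V t
      have hle : ∀ j, g j t ≤ g k t := fun j ↦ (le_V (some j) t).trans hk.ge
      rw [← hk]
      exact hactive t ht (fun j ↦ (hle j).trans_lt (hk ▸ hVε)) k ((le_V none t).trans hk.ge) hle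
  have hVa : V a ≤ 0 := by
    refine Finset.sup'_le _ _ ?_
    rintro (_ | k) -
    exacts [le_rfl, ha k]
  intro t ht k
  refine (le_V (some k) t).trans (nonpos_of_frequently_slope_lt (K := K) hV hε ?_ hVa t ht)
  intro s hs hVs r hr
  refine (eventually_slope_finset_sup'_lt _ (fun k _ ↦ hh k s) ?_).frequently
  exact fun k _ hk ↦ (hactiveV s hs hVs k hk).trans_lt hr

theorem mul_sum_le_sum_mul {ι : Type*} [Fintype ι] {w y : ι → ℝ} {c : ℝ} (hw : ∀ j, 0 ≤ w j)
    (hy : ∀ j, c ≤ y j) : c * ∑ j, w j ≤ ∑ j, w j * y j := by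
  rw [Finset.mul_sum]
  exact Finset.sum_le_sum fun j _ ↦ by nlinarith [hw j, hy j]

theorem neg_mul_le_of_ge_neg_of_le {u S M b c : ℝ} (hM : 0 ≤ M) (hc : 0 ≤ c)
    (hu : -M ≤ u) (huc : u ≤ c) (hS : -M * b ≤ S) (hSc : S ≤ c * b) :
    -(u * S) ≤ c * M * b := by
  rcases le_total 0 u with hu0 | hu0 <;> rcases le_total 0 S with hS0 | hS0 <;>
    nlinarith

section BiVirus

variable {n : ℕ}

def biVirusField (δ : Fin n → ℝ) (B : Matrix (Fin n) (Fin n) ℝ) (y z : Fin n → ℝ)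
    (i : Fin n) : ℝ :=
  -δ i * y i + (1 - y i - z i) * ∑ j, B i j * y j

section FieldBounds

variable {δ : Fin n → ℝ} {B : Matrix (Fin n) (Fin n) ℝ} {y z : Fin n → ℝ} {M : ℝ}

theorem neg_biVirusField_le (hB : ∀ i j, 0 ≤ B i j) (hδ : ∀ i, 0 ≤ δ i) (hM0 : 0 ≤ M)
    (hM1 : M ≤ 1) (hy : ∀ j, -M ≤ y j) (hz : ∀ j, -M ≤ z j) (hyz : ∀ j, y j + z j ≤ 1 + M)
    {i : Fin n} (hyi : y i = -M) :
    -biVirusField δ B y z i ≤ 3 * M * ∑ j, B i j := by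
  have hyle : ∀ j, y j ≤ 3 := fun j ↦ by linarith [hz j, hyz j]
  have hlow : -M * ∑ j, B i j ≤ ∑ j, B i j * y j := mul_sum_le_sum_mul (hB i) hy
  have hup : ∑ j, B i j * y j ≤ 3 * ∑ j, B i j := by
    rw [Finset.mul_sum]
    exact Finset.sum_le_sum fun j _ ↦ by nlinarith [hB i j, hyle j]
  have hrate := neg_mul_le_of_ge_neg_of_le (u := 1 - y i - z i) hM0 zero_le_three
    (by linarith [hyz i]) (by linarith [hz i]) hlow hup
  have hδy : δ i * y i ≤ 0 := by rw [hyi]; nlinarith [hδ i]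
  unfold biVirusField
  linarith

theorem biVirusField_le (hB : ∀ i j, 0 ≤ B i j) (hδ : ∀ i, 0 ≤ δ i) (hM0 : 0 ≤ M)
    (hM1 : M ≤ 1) (hy : ∀ j, -M ≤ y j) {i : Fin n} (hyzi : y i + z i = 1 + M) :
    biVirusField δ B y z i ≤ M * (δ i + ∑ j, B i j) := by
  have hlow : -M * ∑ j, B i j ≤ ∑ j, B i j * y j := mul_sum_le_sum_mul (hB i) hy
  have hb : 0 ≤ ∑ j, B i j := Finset.sum_nonneg fun j _ ↦ hB i j
  have hu : 1 - y i - z i = -M := by linarith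
  unfold biVirusField
  rw [hu]
  nlinarith [hδ i, hy i, mul_nonneg hM0 hb]

end FieldBounds

def biVirusConstraint (y z : Fin n → ℝ) : Fin n ⊕ Fin n ⊕ Fin n → ℝ
  | .inl i => -y i
  | .inr (.inl i) => -z i
  | .inr (.inr i) => y i + z i - 1

def biVirusConstraintDeriv (v w : Fin n → ℝ) : Fin n ⊕ Fin n ⊕ Fin n → ℝ
  | .inl i => -v i
  | .inr (.inl i) => -w i
  | .inr (.inr i) => v i + w i

theorem biVirusConstraint_nonpos_iff {y z : Fin n → ℝ} :
    (∀ k, biVirusConstraint y z k ≤ 0) ↔ ∀ i, 0 ≤ y i ∧ 0 ≤ z i ∧ y i + z i ≤ 1 := by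
  simp only [Sum.forall, biVirusConstraint, neg_nonpos, sub_nonpos]
  exact ⟨fun ⟨hy, hz, hyz⟩ i ↦ ⟨hy i, hz i, hyz i⟩,
    fun h ↦ ⟨fun i ↦ (h i).1, fun i ↦ (h i).2.1, fun i ↦ (h i).2.2⟩⟩

theorem hasDerivAt_biVirusConstraint {x y : ℝ → Fin n → ℝ} {v w : Fin n → ℝ} {t : ℝ}
    (hx : ∀ i, HasDerivAt (x · i) (v i) t) (hy : ∀ i, HasDerivAt (y · i) (w i) t) (k) :
    HasDerivAt (fun s ↦ biVirusConstraint (x s) (y s) k) (biVirusConstraintDeriv v w k) t := by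
  rcases k with i | i | i
  exacts [(hx i).neg, (hy i).neg, ((hx i).add (hy i)).sub_const 1]

theorem biVirusConstraintDeriv_field_le {δ1 δ2 : Fin n → ℝ} {B1 B2 : Matrix (Fin n) (Fin n) ℝ}
    (hδ1 : ∀ i, 0 ≤ δ1 i) (hδ2 : ∀ i, 0 ≤ δ2 i) (hB1 : ∀ i j, 0 ≤ B1 i j)
    (hB2 : ∀ i j, 0 ≤ B2 i j) {K : ℝ}
    (hK : ∀ i, δ1 i + δ2 i + 3 * (∑ j, B1 i j + ∑ j, B2 i j) ≤ K)
    {y z : Fin n → ℝ} (hsmall : ∀ j, biVirusConstraint y z j < 1) {k : Fin n ⊕ Fin n ⊕ Fin n}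
    (hk0 : 0 ≤ biVirusConstraint y z k)
    (hmax : ∀ j, biVirusConstraint y z j ≤ biVirusConstraint y z k) :
    biVirusConstraintDeriv (biVirusField δ1 B1 y z) (biVirusField δ2 B2 z y) k ≤
      K * biVirusConstraint y z k := by
  set M := biVirusConstraint y z k
  have hM1 : M ≤ 1 := (hsmall k).le
  have hy : ∀ j, -M ≤ y j := fun j ↦ neg_le.mp (hmax (.inl j))
  have hz : ∀ j, -M ≤ z j := fun j ↦ neg_le.mp (hmax (.inr (.inl j)))
  have hyz : ∀ j, y j + z j ≤ 1 + M := fun j ↦ sub_le_iff_le_add'.mp (hmax (.inr (.inr j)))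
  have hb1 : ∀ i, 0 ≤ ∑ j, B1 i j := fun i ↦ Finset.sum_nonneg fun j _ ↦ hB1 i j
  have hb2 : ∀ i, 0 ≤ ∑ j, B2 i j := fun i ↦ Finset.sum_nonneg fun j _ ↦ hB2 i j
  have hKM : ∀ i, (δ1 i + δ2 i + 3 * (∑ j, B1 i j + ∑ j, B2 i j)) * M ≤ K * M :=
    fun i ↦ mul_le_mul_of_nonneg_right (hK i) hk0
  rcases k with i | i | i
  · calc -biVirusField δ1 B1 y z i
        ≤ 3 * M * ∑ j, B1 i j := neg_biVirusField_le hB1 hδ1 hk0 hM1 hy hz hyz (neg_neg _).symm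
      _ ≤ (δ1 i + δ2 i + 3 * (∑ j, B1 i j + ∑ j, B2 i j)) * M := by
        nlinarith [mul_nonneg (hδ1 i) hk0, mul_nonneg (hδ2 i) hk0, mul_nonneg (hb2 i) hk0]
      _ ≤ K * M := hKM i
  · calc -biVirusField δ2 B2 z y i
        ≤ 3 * M * ∑ j, B2 i j := neg_biVirusField_le hB2 hδ2 hk0 hM1 hz hy
          (fun j ↦ add_comm (z j) (y j) ▸ hyz j) (neg_neg _).symm
      _ ≤ (δ1 i + δ2 i + 3 * (∑ j, B1 i j + ∑ j, B2 i j)) * M := by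
        nlinarith [mul_nonneg (hδ1 i) hk0, mul_nonneg (hδ2 i) hk0, mul_nonneg (hb1 i) hk0]
      _ ≤ K * M := hKM i
  · have hyzi : y i + z i = 1 + M := (add_sub_cancel 1 _).symm
    calc biVirusField δ1 B1 y z i + biVirusField δ2 B2 z y i
        ≤ M * (δ1 i + ∑ j, B1 i j) + M * (δ2 i + ∑ j, B2 i j) :=
          add_le_add (biVirusField_le hB1 hδ1 hk0 hM1 hy hyzi)
            (biVirusField_le hB2 hδ2 hk0 hM1 hz (add_comm (z i) (y i) ▸ hyzi))
      _ ≤ (δ1 i + δ2 i + 3 * (∑ j, B1 i j + ∑ j, B2 i j)) * M := by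
        nlinarith [mul_nonneg (add_nonneg (hb1 i) (hb2 i)) hk0]
      _ ≤ K * M := hKM i

end BiVirus

theorem stmt3 {n : ℕ} (δ1 δ2 : Fin n → ℝ) (B1 B2 : Matrix (Fin n) (Fin n) ℝ)
    (hδ1 : ∀ i, 0 ≤ δ1 i) (hδ2 : ∀ i, 0 ≤ δ2 i)
    (hB1 : ∀ i j, 0 ≤ B1 i j) (hB2 : ∀ i j, 0 ≤ B2 i j)
    (x1 x2 : ℝ → Fin n → ℝ)
    (hode1 : ∀ t i, HasDerivAt (fun s => x1 s i)
      (-δ1 i * x1 t i + (1 - x1 t i - x2 t i) * ∑ j, B1 i j * x1 t j) t)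
    (hode2 : ∀ t i, HasDerivAt (fun s => x2 s i)
      (-δ2 i * x2 t i + (1 - x1 t i - x2 t i) * ∑ j, B2 i j * x2 t j) t)
    (hinit : ∀ i, 0 ≤ x1 0 i ∧ 0 ≤ x2 0 i ∧ x1 0 i + x2 0 i ≤ 1) :
    ∀ t ≥ (0 : ℝ), ∀ i, 0 ≤ x1 t i ∧ 0 ≤ x2 t i ∧ x1 t i + x2 t i ≤ 1 := by
  have hfield1 : ∀ t i, HasDerivAt (x1 · i) (biVirusField δ1 B1 (x1 t) (x2 t) i) t := hode1
  have hfield2 : ∀ t i, HasDerivAt (x2 · i) (biVirusField δ2 B2 (x2 t) (x1 t) i) t := by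
    simpa only [biVirusField, sub_right_comm (1 : ℝ) (x2 _ _)] using hode2
  obtain ⟨K, hK⟩ := Finite.exists_le fun i ↦ δ1 i + δ2 i + 3 * (∑ j, B1 i j + ∑ j, B2 i j)
  have hinvariant := nonpos_of_active_deriv_le_mul one_pos
    (fun k t ↦ hasDerivAt_biVirusConstraint (hfield1 t) (hfield2 t) k)
    (fun t _ hsmall k hk0 hmax ↦
      biVirusConstraintDeriv_field_le hδ1 hδ2 hB1 hB2 hK hsmall hk0 hmax)
    (biVirusConstraint_nonpos_iff.2 hinit)
  exact fun t ht ↦ biVirusConstraint_nonpos_iff.1 (hinvariant t ht)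
end

section
/- Consider the single-virus ODE ż_i = -δ_i z_i + (1 - z_i) Σ_j β_{ij} z_j with δ_i ≥ 0 and B = (β_{ij}) nonnegative and irreducible. If z* is a nonzero equilibrium with z* ∈ [0,1]^n, then every entry of z* is strictly positive. -/
/-!
At a healthy node `i` (`z i = 0`) the equilibrium equation reduces to `∑ j, β i j * z j = 0`, a sum
of nonnegative terms, so every node `j` with `β i j > 0` is healthy as well. Irreducibility then
spreads health from one node to the whole network, contradicting `z ≠ 0`.
-/

theorem eq_zero_of_sum_mul_eq_zero_of_nonneg {ι : Type*} [Fintype ι] {w x : ι → ℝ}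
    (hw : ∀ j, 0 ≤ w j) (hx : ∀ j, 0 ≤ x j) (hsum : ∑ j, w j * x j = 0) {j : ι}
    (hj : 0 < w j) : x j = 0 := by
  have hterm : w j * x j = 0 :=
    (Finset.sum_eq_zero_iff_of_nonneg fun k _ => mul_nonneg (hw k) (hx k)).mp hsum j
      (Finset.mem_univ j)
  exact (mul_eq_zero.mp hterm).resolve_left hj.ne'

theorem Irred.of_backward_closed {n : ℕ} {M : Matrix (Fin n) (Fin n) ℝ} (hM : Irred M)
    {P : Fin n → Prop} (hP : ∀ i j, 0 < M i j → P i → P j) {i : Fin n} (hi : P i) (j : Fin n) :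
    P j := by
  obtain ⟨m, c, hc0, hcm, hedge⟩ := hM i j
  have hpath : ∀ k ≤ m, P (c k) := fun k hk =>
    Nat.decreasingInduction (motive := fun k _ => P (c k))
      (fun k hk ih => hP _ _ (hedge k hk) ih) (hcm ▸ hi) hk
  exact hc0 ▸ hpath 0 m.zero_le

theorem stmt4_general {n : ℕ} (δ : Fin n → ℝ) (B : Matrix (Fin n) (Fin n) ℝ)
    (hB : ∀ i j, 0 ≤ B i j) (hirr : Irred B)
    (z : Fin n → ℝ) (hbox : ∀ i, z i ∈ Set.Icc (0 : ℝ) 1) (hz0 : z ≠ 0)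
    (heq : ∀ i, -δ i * z i + (1 - z i) * ∑ j, B i j * z j = 0) :
    ∀ i, 0 < z i := by
  by_contra! hneg
  obtain ⟨i, hi⟩ := hneg
  have hzi : z i = 0 := le_antisymm hi (hbox i).1
  have hclosed : ∀ k j, 0 < B k j → z k = 0 → z j = 0 := fun k j hkj hk =>
    eq_zero_of_sum_mul_eq_zero_of_nonneg (hB k) (fun j => (hbox j).1)
      (by simpa [hk] using heq k) hkj
  exact hz0 (funext fun j => hirr.of_backward_closed hclosed hzi j)

theorem stmt4 {n : ℕ} (δ : Fin n → ℝ) (B : Matrix (Fin n) (Fin n) ℝ)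
    (hδ : ∀ i, 0 ≤ δ i) (hB : ∀ i j, 0 ≤ B i j) (hirr : Irred B)
    (z : Fin n → ℝ) (hbox : ∀ i, z i ∈ Set.Icc (0 : ℝ) 1) (hz0 : z ≠ 0)
    (heq : ∀ i, -δ i * z i + (1 - z i) * ∑ j, B i j * z j = 0) :
    ∀ i, 0 < z i :=
  stmt4_general δ B hB hirr z hbox hz0 heq
end

section
/- Consider the single-virus ODE with δ_i ≥ 0, B nonnegative and irreducible, and s(-D + B) > 0. Then the nonzero equilibrium in [0,1]^n is unique: if x and y are both nonzero equilibria in [0,1]^n, then x = y. -/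
/-!
At an index `i` where the ratio `x i / y i` of two positive equilibria is maximal, say equal
to `κ`, we have `x ≤ κ y`, so the equilibrium equation at `i` gives
`κ (1 - y i) (B y)_i = δ i x i = (1 - x i) (B x)_i ≤ κ (1 - x i) (B y)_i`, whence `x i ≤ y i`
and `κ ≤ 1`. By symmetry `x = y`. This needs `(B y)_i > 0`, i.e. that no row of `B` vanishes;
for an irreducible `B` a zero row forces `n = 1`, `B = 0` and then `δ = 0`, which is excluded
by `s(-D + B) > 0`.
-/

namespace Irred

variable {n : ℕ} {M : Matrix (Fin n) (Fin n) ℝ}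

theorem forall_of_closed (hM : Irred M) {P : Fin n → Prop}
    (hP : ∀ p j, P p → 0 < M p j → P j) {i : Fin n} (hi : P i) (j : Fin n) : P j := by
  obtain ⟨m, c, hc0, hcm, hedge⟩ := hM i j
  have hpath : ∀ k ≤ m, P (c k) := fun k hk =>
    Nat.decreasingInduction (motive := fun k _ => P (c k))
      (fun k hkm ih => hP _ _ ih (hedge k hkm)) (hcm ▸ hi) hk
  exact hc0 ▸ hpath 0 m.zero_le

theorem eq_of_row_eq_zero (hM : Irred M) {i : Fin n} (hi : ∀ j, M i j = 0) (j : Fin n) :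
    j = i :=
  hM.forall_of_closed (P := (· = i))
    (fun p j hp hpj => absurd hpj (by simp [hp, hi])) rfl j

end Irred

theorem spA_zero {n : ℕ} : spA (0 : Matrix (Fin n) (Fin n) ℝ) = 0 := by
  rcases isEmpty_or_nonempty (Fin n) with _ | _
  · simp [spA, spectrum.of_subsingleton]
  · simp [spA, spectrum.zero_eq]

def IsSISEquilibrium {n : ℕ} (δ : Fin n → ℝ) (B : Matrix (Fin n) (Fin n) ℝ)
    (x : Fin n → ℝ) : Prop :=
  ∀ i, -δ i * x i + (1 - x i) * ∑ j, B i j * x j = 0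

section Equilibrium

variable {n : ℕ} {δ : Fin n → ℝ} {B : Matrix (Fin n) (Fin n) ℝ} {x y : Fin n → ℝ}

theorem IsSISEquilibrium.pos (hB : ∀ i j, 0 ≤ B i j) (hirr : Irred B)
    (hx : IsSISEquilibrium δ B x) (hx_nonneg : ∀ i, 0 ≤ x i) (hx0 : x ≠ 0) (i : Fin n) :
    0 < x i := by
  obtain ⟨k, hk⟩ := Function.ne_iff.mp hx0
  have hzero_closed : ∀ p j, x p = 0 → 0 < B p j → x j = 0 := by
    intro p j hp hpj
    have hsum : ∑ j, B p j * x j = 0 := by simpa [hp] using hx p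
    have hterm := (Finset.sum_eq_zero_iff_of_nonneg
      (fun j _ => mul_nonneg (hB p j) (hx_nonneg j))).mp hsum j (Finset.mem_univ j)
    exact (mul_eq_zero.mp hterm).resolve_left hpj.ne'
  refine (hx_nonneg i).lt_of_ne fun hi => hk ?_
  exact hirr.forall_of_closed (P := (x · = 0)) hzero_closed hi.symm k

theorem IsSISEquilibrium.le (hB : ∀ i j, 0 ≤ B i j) (hrow : ∀ i, ∃ j, 0 < B i j)
    (hx : IsSISEquilibrium δ B x) (hy : IsSISEquilibrium δ B y)
    (hx_le_one : ∀ i, x i ≤ 1) (hx_pos : ∀ i, 0 < x i) (hy_pos : ∀ i, 0 < y i) :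
    x ≤ y := by
  intro i₀
  obtain ⟨i, -, hi⟩ := Finset.exists_max_image Finset.univ (fun j => x j / y j)
    ⟨i₀, Finset.mem_univ i₀⟩
  set κ := x i / y i
  have hκ : 0 < κ := div_pos (hx_pos i) (hy_pos i)
  have hxi : x i = κ * y i := (div_mul_cancel₀ _ (hy_pos i).ne').symm
  have hx_le : ∀ j, x j ≤ κ * y j := fun j =>
    (div_le_iff₀ (hy_pos j)).mp (hi j (Finset.mem_univ j))
  set S := ∑ j, B i j * y j
  have hS : 0 < S := by
    obtain ⟨j, hj⟩ := hrow i
    exact Finset.sum_pos' (fun j _ => mul_nonneg (hB i j) (hy_pos j).le)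
      ⟨j, Finset.mem_univ j, mul_pos hj (hy_pos j)⟩
  have hBx : ∑ j, B i j * x j ≤ κ * S := by
    rw [Finset.mul_sum]
    exact Finset.sum_le_sum fun j _ => by nlinarith [hB i j, hx_le j]
  have hxy : x i ≤ y i := by
    have key : κ * ((1 - y i) * S) ≤ κ * ((1 - x i) * S) := calc
      κ * ((1 - y i) * S) = δ i * x i := by rw [hxi]; linear_combination κ * hy i
      _ = (1 - x i) * ∑ j, B i j * x j := by linear_combination -(hx i)
      _ ≤ (1 - x i) * (κ * S) := mul_le_mul_of_nonneg_left hBx (by linarith [hx_le_one i])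
      _ = κ * ((1 - x i) * S) := by ring
    linarith [le_of_mul_le_mul_right (le_of_mul_le_mul_left key hκ) hS]
  have hκ_le_one : κ ≤ 1 := (div_le_one (hy_pos i)).mpr hxy
  calc x i₀ ≤ κ * y i₀ := hx_le i₀
    _ ≤ y i₀ := by nlinarith [hy_pos i₀]

theorem IsSISEquilibrium.exists_pos_of_spA_pos (hB : ∀ i j, 0 ≤ B i j) (hirr : Irred B)
    (hx : IsSISEquilibrium δ B x) (hx_pos : ∀ i, 0 < x i)
    (hs : 0 < spA (-(Matrix.diagonal δ) + B)) (i : Fin n) : ∃ j, 0 < B i j := by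
  by_contra! hi
  have hrow : ∀ j, B i j = 0 := fun j => le_antisymm (hi j) (hB i j)
  have hδ : δ i = 0 := by
    have := hx i
    simp only [hrow, zero_mul, Finset.sum_const_zero, mul_zero, add_zero, neg_mul,
      neg_eq_zero, mul_eq_zero] at this
    exact this.resolve_right (hx_pos i).ne'
  have hM : -(Matrix.diagonal δ) + B = 0 := by
    ext a b
    obtain rfl := hirr.eq_of_row_eq_zero hrow a
    obtain rfl := hirr.eq_of_row_eq_zero hrow b
    simp [hδ, hrow]
  exact hs.ne' (hM ▸ spA_zero)

end Equilibrium
theorem stmt6_general {n : ℕ} (δ : Fin n → ℝ) (B : Matrix (Fin n) (Fin n) ℝ)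
    (hB : ∀ i j, 0 ≤ B i j) (hirr : Irred B)
    (hs : 0 < spA (-(Matrix.diagonal δ) + B))
    (x y : Fin n → ℝ)
    (hxbox : ∀ i, x i ∈ Set.Icc (0 : ℝ) 1) (hybox : ∀ i, y i ∈ Set.Icc (0 : ℝ) 1)
    (hx0 : x ≠ 0) (hy0 : y ≠ 0)
    (hxeq : ∀ i, -δ i * x i + (1 - x i) * ∑ j, B i j * x j = 0)
    (hyeq : ∀ i, -δ i * y i + (1 - y i) * ∑ j, B i j * y j = 0) :
    x = y := by
  have hx : IsSISEquilibrium δ B x := hxeq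
  have hy : IsSISEquilibrium δ B y := hyeq
  have hx_pos := hx.pos hB hirr (fun i => (hxbox i).1) hx0
  have hy_pos := hy.pos hB hirr (fun i => (hybox i).1) hy0
  have hrow := hx.exists_pos_of_spA_pos hB hirr hx_pos hs
  exact le_antisymm (hx.le hB hrow hy (fun i => (hxbox i).2) hx_pos hy_pos)
    (hy.le hB hrow hx (fun i => (hybox i).2) hy_pos hx_pos)

theorem stmt6 {n : ℕ} (δ : Fin n → ℝ) (B : Matrix (Fin n) (Fin n) ℝ)
    (hδ : ∀ i, 0 ≤ δ i) (hB : ∀ i j, 0 ≤ B i j) (hirr : Irred B)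
    (hs : 0 < spA (-(Matrix.diagonal δ) + B))
    (x y : Fin n → ℝ)
    (hxbox : ∀ i, x i ∈ Set.Icc (0 : ℝ) 1) (hybox : ∀ i, y i ∈ Set.Icc (0 : ℝ) 1)
    (hx0 : x ≠ 0) (hy0 : y ≠ 0)
    (hxeq : ∀ i, -δ i * x i + (1 - x i) * ∑ j, B i j * x j = 0)
    (hyeq : ∀ i, -δ i * y i + (1 - y i) * ∑ j, B i j * y j = 0) :
    x = y :=
  stmt6_general δ B hB hirr hs x y hxbox hybox hx0 hy0 hxeq hyeq
end

section
/- Suppose both viruses spread over the same strongly connected directed graph with homogeneous rates: δ¹_i = δ¹ > 0, δ²_i = δ² > 0 for all i, β¹_{ij} = β¹ a_{ij}, β²_{ij} = β² a_{ij} with β¹, β² > 0 and A = (a_{ij}) the irreducible 0-1 adjacency matrix. If (x̃¹, x̃²) is an equilibrium of the bi-virus system with x̃¹ > 0 and x̃² > 0 (both nonzero), then δ¹/β¹ = δ²/β². -/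
/-! At an equilibrium with `s i = 1 - x¹ i - x² i`, both `x¹` and `x²` are nonnegative
eigenvectors of the same matrix `diag(s) A`, with eigenvalues `δ¹/β¹` and `δ²/β²`.
Since `s ≫ 0`, this matrix is irreducible, so both eigenvectors are strictly positive.
Comparing two positive eigenvectors `u, v` of a nonnegative matrix at an index maximizing
`v i / u i` shows that their eigenvalues coincide. -/

open Matrix

section PositiveEigenvector

variable {ι : Type*} [Fintype ι] {M : Matrix ι ι ℝ} {u v : ι → ℝ} {μ ν : ℝ}

theorem eigenvalue_le_of_pos_eigenvectors [Nonempty ι] (hM : ∀ i j, 0 ≤ M i j)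
    (hu : ∀ i, 0 < u i) (hv : ∀ i, 0 < v i)
    (hMu : M *ᵥ u = μ • u) (hMv : M *ᵥ v = ν • v) : ν ≤ μ := by
  obtain ⟨i, -, hmax⟩ := Finset.univ.exists_max_image (fun j => v j / u j) Finset.univ_nonempty
  set r := v i / u i
  have hvr : ∀ j, v j ≤ r * u j := fun j =>
    (div_le_iff₀ (hu j)).mp (hmax j (Finset.mem_univ j))
  have hMvr : (M *ᵥ v) i ≤ r * (M *ᵥ u) i := by
    simp only [mulVec, dotProduct, Finset.mul_sum]
    exact Finset.sum_le_sum fun j _ => by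
      linarith [mul_le_mul_of_nonneg_left (hvr j) (hM i j)]
  have hvi : v i = r * u i := (div_mul_cancel₀ (v i) (hu i).ne').symm
  have key : ν * v i ≤ μ * v i :=
    calc ν * v i = (M *ᵥ v) i := by rw [hMv, Pi.smul_apply, smul_eq_mul]
      _ ≤ r * (M *ᵥ u) i := hMvr
      _ = μ * v i := by rw [hMu, Pi.smul_apply, smul_eq_mul, hvi]; ring
  exact le_of_mul_le_mul_right key (hv i)

theorem eigenvalue_eq_of_pos_eigenvectors [Nonempty ι] (hM : ∀ i j, 0 ≤ M i j)
    (hu : ∀ i, 0 < u i) (hv : ∀ i, 0 < v i)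
    (hMu : M *ᵥ u = μ • u) (hMv : M *ᵥ v = ν • v) : μ = ν :=
  le_antisymm (eigenvalue_le_of_pos_eigenvectors hM hv hu hMv hMu)
    (eigenvalue_le_of_pos_eigenvectors hM hu hv hMu hMv)

end PositiveEigenvector

namespace Irred

variable {n : ℕ} {M : Matrix (Fin n) (Fin n) ℝ}

theorem mono {N : Matrix (Fin n) (Fin n) ℝ} (hM : Irred M) (hMN : ∀ i j, 0 < M i j → 0 < N i j) :
    Irred N := fun i j => by
  obtain ⟨m, c, hc0, hcm, hstep⟩ := hM i j
  exact ⟨m, c, hc0, hcm, fun k hk => hMN _ _ (hstep k hk)⟩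

theorem pos_of_support_closed (hM : Irred M) {x : Fin n → ℝ} (hx0 : ∀ i, 0 ≤ x i) (hx : x ≠ 0)
    (hclosed : ∀ i j, x i = 0 → 0 < M i j → x j = 0) (i : Fin n) : 0 < x i := by
  obtain ⟨j, hj⟩ := Function.ne_iff.mp hx
  obtain ⟨m, c, hc0, hcm, hstep⟩ := hM i j
  have hpath : ∀ k ≤ m, 0 < x (c k) := by
    intro k
    induction k with
    | zero => exact fun _ => hc0 ▸ (hx0 j).lt_of_ne' hj
    | succ k ih =>
      intro hk
      refine (hx0 _).lt_of_ne' fun hzero => ?_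
      exact (ih (k.le_succ.trans hk)).ne' (hclosed _ _ hzero (hstep k hk))
  exact hcm ▸ hpath m le_rfl

theorem pos_of_mulVec_eq_smul (hM : Irred M) (hM0 : ∀ i j, 0 ≤ M i j) {x : Fin n → ℝ}
    (hx0 : ∀ i, 0 ≤ x i) (hx : x ≠ 0) {μ : ℝ} (hMx : M *ᵥ x = μ • x) (i : Fin n) : 0 < x i := by
  refine hM.pos_of_support_closed hx0 hx (fun p q hxp hMpq => ?_) i
  have hrow : ∑ k, M p k * x k = 0 := by
    simpa [mulVec, dotProduct, hxp] using congrFun hMx p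
  have hterm := (Finset.sum_eq_zero_iff_of_nonneg fun k _ => mul_nonneg (hM0 p k) (hx0 k)).mp
    hrow q (Finset.mem_univ q)
  exact (mul_eq_zero.mp hterm).resolve_left hMpq.ne'

end Irred

theorem one_sub_add_pos_of_equilibrium {a b δ₁ δ₂ S₁ S₂ : ℝ} (hδ₁ : δ₁ ≠ 0) (hδ₂ : δ₂ ≠ 0)
    (hab : a + b ≤ 1) (h₁ : -δ₁ * a + (1 - a - b) * S₁ = 0)
    (h₂ : -δ₂ * b + (1 - a - b) * S₂ = 0) : 0 < 1 - a - b := by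
  refine (by linarith : (0 : ℝ) ≤ 1 - a - b).lt_of_ne' fun hzero => ?_
  rw [hzero, zero_mul, add_zero, mul_eq_zero] at h₁ h₂
  have ha : a = 0 := h₁.resolve_left (neg_ne_zero.mpr hδ₁)
  have hb : b = 0 := h₂.resolve_left (neg_ne_zero.mpr hδ₂)
  simp [ha, hb] at hzero

theorem diagonal_mul_mulVec_eq_smul_of_equilibrium {ι : Type*} [Fintype ι] [DecidableEq ι]
    {A : Matrix ι ι ℝ} {s x : ι → ℝ} {δ β : ℝ} (hβ : β ≠ 0)
    (h : ∀ i, -δ * x i + s i * ∑ j, β * A i j * x j = 0) :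
    (diagonal s * A) *ᵥ x = (δ / β) • x := by
  ext i
  have hi := h i
  simp only [mul_assoc, ← Finset.mul_sum] at hi
  rw [← mulVec_mulVec, mulVec_diagonal, Pi.smul_apply, smul_eq_mul]
  simp only [mulVec, dotProduct]
  field_simp
  linarith

theorem stmt8 {n : ℕ} (A : Matrix (Fin n) (Fin n) ℝ)
    (hA01 : ∀ i j, A i j = 0 ∨ A i j = 1) (hirr : Irred A)
    (δ1 δ2 β1 β2 : ℝ) (hδ1 : 0 < δ1) (hδ2 : 0 < δ2) (hβ1 : 0 < β1) (hβ2 : 0 < β2)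
    (x1 x2 : Fin n → ℝ)
    (hdom : ∀ i, 0 ≤ x1 i ∧ 0 ≤ x2 i ∧ x1 i + x2 i ≤ 1)
    (hx1 : x1 ≠ 0) (hx2 : x2 ≠ 0)
    (heq1 : ∀ i, -δ1 * x1 i + (1 - x1 i - x2 i) * ∑ j, β1 * A i j * x1 j = 0)
    (heq2 : ∀ i, -δ2 * x2 i + (1 - x1 i - x2 i) * ∑ j, β2 * A i j * x2 j = 0) :
    δ1 / β1 = δ2 / β2 := by
  have hs : ∀ i, 0 < 1 - x1 i - x2 i := fun i =>
    one_sub_add_pos_of_equilibrium hδ1.ne' hδ2.ne' (hdom i).2.2 (heq1 i) (heq2 i)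
  set M := diagonal (fun i => 1 - x1 i - x2 i) * A
  have hMentry : ∀ i j, M i j = (1 - x1 i - x2 i) * A i j := diagonal_mul _ _
  have hA0 : ∀ i j, 0 ≤ A i j := fun i j => by rcases hA01 i j with h | h <;> simp [h]
  have hM0 : ∀ i j, 0 ≤ M i j := fun i j => hMentry i j ▸ mul_nonneg (hs i).le (hA0 i j)
  have hMirr : Irred M := hirr.mono fun i j hAij => hMentry i j ▸ mul_pos (hs i) hAij
  have hMx1 := diagonal_mul_mulVec_eq_smul_of_equilibrium hβ1.ne' heq1
  have hMx2 := diagonal_mul_mulVec_eq_smul_of_equilibrium hβ2.ne' heq2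
  have : Nonempty (Fin n) := (Function.ne_iff.mp hx1).nonempty
  exact eigenvalue_eq_of_pos_eigenvectors hM0
    (hMirr.pos_of_mulVec_eq_smul hM0 (fun i => (hdom i).1) hx1 hMx1)
    (hMirr.pos_of_mulVec_eq_smul hM0 (fun i => (hdom i).2.1) hx2 hMx2) hMx1 hMx2
end

section
/- If (x̃¹, x̃²) is an equilibrium of the bi-virus system with homogeneous rates (δ¹_i = δ¹ > 0, β¹_{ij} = β¹ a_{ij}, etc., same strongly connected graph A), then x̃¹ + x̃² ≪ 1, i.e., x̃¹_i + x̃²_i < 1 for every i. -/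
/-! At a node with `x¹ᵢ + x²ᵢ = 1` the infection terms of both equilibrium equations vanish,
so the recovery terms `δ¹ x¹ᵢ` and `δ² x²ᵢ` vanish too; then `x¹ᵢ = x²ᵢ = 0`, contradicting
`x¹ᵢ + x²ᵢ = 1`. -/

lemma eq_zero_of_neg_mul_add_mul_eq_zero {δ x s y : ℝ} (hδ : 0 < δ) (hs : s = 0)
    (h : -δ * x + s * y = 0) : x = 0 := by
  subst hs
  have hδx : δ * x = 0 := by linarith
  exact (mul_eq_zero.mp hδx).resolve_left hδ.ne'

theorem stmt9_general {n : ℕ} (A : Matrix (Fin n) (Fin n) ℝ)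
    (δ1 δ2 β1 β2 : ℝ) (hδ1 : 0 < δ1) (hδ2 : 0 < δ2)
    (x1 x2 : Fin n → ℝ)
    (hdom : ∀ i, 0 ≤ x1 i ∧ 0 ≤ x2 i ∧ x1 i + x2 i ≤ 1)
    (heq1 : ∀ i, -δ1 * x1 i + (1 - x1 i - x2 i) * ∑ j, β1 * A i j * x1 j = 0)
    (heq2 : ∀ i, -δ2 * x2 i + (1 - x1 i - x2 i) * ∑ j, β2 * A i j * x2 j = 0) :
    ∀ i, x1 i + x2 i < 1 := by
  intro i
  obtain ⟨-, -, hle⟩ := hdom i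
  refine hle.lt_of_ne fun hsat => ?_
  have hfree : 1 - x1 i - x2 i = 0 := by linarith
  have hx1 := eq_zero_of_neg_mul_add_mul_eq_zero hδ1 hfree (heq1 i)
  have hx2 := eq_zero_of_neg_mul_add_mul_eq_zero hδ2 hfree (heq2 i)
  linarith

theorem stmt9 {n : ℕ} (A : Matrix (Fin n) (Fin n) ℝ)
    (hA01 : ∀ i j, A i j = 0 ∨ A i j = 1) (hAloop : ∀ i, A i i = 1) (hirr : Irred A)
    (δ1 δ2 β1 β2 : ℝ) (hδ1 : 0 < δ1) (hδ2 : 0 < δ2) (hβ1 : 0 < β1) (hβ2 : 0 < β2)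
    (x1 x2 : Fin n → ℝ)
    (hdom : ∀ i, 0 ≤ x1 i ∧ 0 ≤ x2 i ∧ x1 i + x2 i ≤ 1)
    (heq1 : ∀ i, -δ1 * x1 i + (1 - x1 i - x2 i) * ∑ j, β1 * A i j * x1 j = 0)
    (heq2 : ∀ i, -δ2 * x2 i + (1 - x1 i - x2 i) * ∑ j, β2 * A i j * x2 j = 0) :
    ∀ i, x1 i + x2 i < 1 :=
  stmt9_general A δ1 δ2 β1 β2 hδ1 hδ2 x1 x2 hdom heq1 heq2
end

section
/- Suppose D¹ = D² = D is a positive diagonal matrix and B¹ = B² = B is irreducible nonnegative with s(-D + B) > 0. If (x̃¹, x̃²) is an equilibrium of the bi-virus system with x̃¹ > 0 and x̃² > 0, then x̃¹ ≫ 0, x̃² ≫ 0, the sum x̃¹ + x̃² equals the unique nonzero equilibrium of the single-virus system ż = (-D + B - ZB)z in [0,1]^n, and x̃¹ = α x̃² for some α > 0. -/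
/-! Writing `s = 1 - x¹ - x²`, both viruses satisfy the same linear equation
`-δ ⊙ x + s ⊙ B x = 0`, and so does their sum `y = x¹ + x²` with `s = 1 - y`, i.e. `y` is a
single-virus equilibrium. An equilibrium in `[0,1]^n` stays below `1` (at `yᵢ = 1` the equation
forces `δᵢ = 0`), so `s ≫ 0`. For an irreducible `B`, a nonnegative nonzero solution of the linear
equation is strictly positive, since a zero coordinate would force the zero to spread along every
edge of the graph of `B`. Applied to `x¹ - α x²` with `α = min x¹/x²`, which is nonnegative with a
zero coordinate, this gives `x¹ = α x²`. Uniqueness of the single-virus equilibrium comes from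
comparing two equilibria at the coordinate where their ratio is maximal. -/

open Matrix

section Equilibrium

variable {n : ℕ} {B : Matrix (Fin n) (Fin n) ℝ}

theorem Irred.pos_of_mulVec_eq_zero (hB : ∀ i j, 0 ≤ B i j) (hirr : Irred B)
    {v : Fin n → ℝ} (hv0 : ∀ i, 0 ≤ v i) (hv : v ≠ 0)
    (hzero : ∀ i, v i = 0 → (B *ᵥ v) i = 0) (i : Fin n) : 0 < v i := by
  obtain ⟨j, hj⟩ : ∃ j, v j ≠ 0 := Function.ne_iff.mp hv
  obtain ⟨m, c, hc0, hcm, hedge⟩ := hirr i j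
  suffices h : ∀ k ≤ m, 0 < v (c k) from hcm ▸ h m le_rfl
  intro k hk
  induction k with
  | zero => exact hc0 ▸ (hv0 j).lt_of_ne' hj
  | succ k ih =>
    refine (hv0 _).lt_of_ne' fun hck => ?_
    have hsum : ∑ l, B (c (k + 1)) l * v l = 0 := hzero _ hck
    have hterm := (Finset.sum_eq_zero_iff_of_nonneg fun l _ => mul_nonneg (hB _ l) (hv0 l)).mp
      hsum (c k) (Finset.mem_univ _)
    exact (mul_pos (hedge k hk) (ih (by omega))).ne' hterm

variable {δ s : Fin n → ℝ}

theorem pos_of_linear_equilibrium (hB : ∀ i j, 0 ≤ B i j) (hirr : Irred B)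
    (hs : ∀ i, s i ≠ 0) {v : Fin n → ℝ} (hv0 : ∀ i, 0 ≤ v i) (hv : v ≠ 0)
    (heq : ∀ i, -δ i * v i + s i * (B *ᵥ v) i = 0) (i : Fin n) : 0 < v i :=
  hirr.pos_of_mulVec_eq_zero hB hv0 hv (fun i hi => by
    simpa [hi, hs i] using heq i) i

theorem exists_pos_smul_of_linear_equilibrium (hB : ∀ i j, 0 ≤ B i j) (hirr : Irred B)
    (hs : ∀ i, s i ≠ 0) {x y : Fin n → ℝ} (hx : ∀ i, 0 < x i) (hy : ∀ i, 0 < y i)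
    (heqx : ∀ i, -δ i * x i + s i * (B *ᵥ x) i = 0)
    (heqy : ∀ i, -δ i * y i + s i * (B *ᵥ y) i = 0) :
    ∃ α > (0 : ℝ), x = α • y := by
  rcases isEmpty_or_nonempty (Fin n) with _ | _
  · exact ⟨1, one_pos, Subsingleton.elim _ _⟩
  obtain ⟨i₀, -, hmin⟩ := Finset.exists_min_image Finset.univ (fun i => x i / y i)
    Finset.univ_nonempty
  set α := x i₀ / y i₀
  refine ⟨α, div_pos (hx i₀) (hy i₀), ?_⟩
  have hw0 : ∀ i, 0 ≤ (x - α • y) i := fun i => by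
    simpa using (le_div_iff₀ (hy i)).mp (hmin i (Finset.mem_univ i))
  have hwi₀ : (x - α • y) i₀ = 0 := by
    simp [α, div_mul_cancel₀ _ (hy i₀).ne']
  have heqw : ∀ i, -δ i * (x - α • y) i + s i * (B *ᵥ (x - α • y)) i = 0 := fun i => by
    simp only [mulVec_sub, mulVec_smul, Pi.sub_apply, Pi.smul_apply, smul_eq_mul]
    linear_combination heqx i - α * heqy i
  by_contra hne
  exact (pos_of_linear_equilibrium hB hirr hs hw0 (sub_ne_zero.mpr hne) heqw i₀).ne' hwi₀

theorem lt_one_of_equilibrium (hδ : ∀ i, 0 < δ i) {z : Fin n → ℝ} (hz1 : ∀ i, z i ≤ 1)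
    (heq : ∀ i, -δ i * z i + (1 - z i) * (B *ᵥ z) i = 0) (i : Fin n) : z i < 1 :=
  (hz1 i).lt_of_ne fun h => (hδ i).ne' (by simpa [h] using heq i)

/-- Two single-virus equilibria compared at the coordinate `i₀` maximising `κ = z/y`: there
`Bz ≤ κ By` turns the two equations into `δ z (1 - y) ≤ δ z (1 - z)`, whence `κ ≤ 1`. -/
theorem le_of_equilibrium (hB : ∀ i j, 0 ≤ B i j) (hδ : ∀ i, 0 < δ i) {y z : Fin n → ℝ}
    (hy0 : ∀ i, 0 < y i) (hy1 : ∀ i, y i ≤ 1) (hz0 : ∀ i, 0 ≤ z i) (hz1 : ∀ i, z i ≤ 1)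
    (heqy : ∀ i, -δ i * y i + (1 - y i) * (B *ᵥ y) i = 0)
    (heqz : ∀ i, -δ i * z i + (1 - z i) * (B *ᵥ z) i = 0) (i : Fin n) : z i ≤ y i := by
  have : Nonempty (Fin n) := ⟨i⟩
  obtain ⟨i₀, -, hmax⟩ := Finset.exists_max_image Finset.univ (fun i => z i / y i)
    Finset.univ_nonempty
  set κ := z i₀ / y i₀
  have hle : ∀ j, z j ≤ κ * y j := fun j =>
    (div_le_iff₀ (hy0 j)).mp (hmax j (Finset.mem_univ j))
  have hzi₀ : z i₀ = κ * y i₀ := (div_mul_cancel₀ _ (hy0 i₀).ne').symm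
  have hBz : (B *ᵥ z) i₀ ≤ κ * (B *ᵥ y) i₀ := by
    simp only [mulVec, dotProduct, Finset.mul_sum]
    exact Finset.sum_le_sum fun j _ => by nlinarith [hle j, hB i₀ j]
  have hκ : κ ≤ 1 := by
    rcases (hz0 i₀).eq_or_lt with hz | hz
    · simp [κ, ← hz]
    have h1z : 0 ≤ 1 - z i₀ := by linarith [hz1 i₀]
    have h1y : 0 ≤ 1 - y i₀ := by linarith [hy1 i₀]
    have key : δ i₀ * z i₀ * (1 - y i₀) ≤ δ i₀ * z i₀ * (1 - z i₀) := calc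
      δ i₀ * z i₀ * (1 - y i₀) = (1 - y i₀) * ((1 - z i₀) * (B *ᵥ z) i₀) := by
        linear_combination -(1 - y i₀) * heqz i₀
      _ ≤ (1 - y i₀) * ((1 - z i₀) * (κ * (B *ᵥ y) i₀)) :=
        mul_le_mul_of_nonneg_left (mul_le_mul_of_nonneg_left hBz h1z) h1y
      _ = δ i₀ * z i₀ * (1 - z i₀) := by
        linear_combination (1 - z i₀) * κ * heqy i₀ - (1 - z i₀) * δ i₀ * hzi₀
    have hzy : z i₀ ≤ y i₀ := by
      linarith [le_of_mul_le_mul_left key (mul_pos (hδ i₀) hz)]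
    exact div_le_one_of_le₀ hzy (hy0 i₀).le
  nlinarith [hle i, hy0 i]

end Equilibrium

theorem stmt11_general {n : ℕ} (δ : Fin n → ℝ) (B : Matrix (Fin n) (Fin n) ℝ)
    (hδ : ∀ i, 0 < δ i) (hB : ∀ i j, 0 ≤ B i j) (hirr : Irred B)
    (x1 x2 : Fin n → ℝ)
    (hdom : ∀ i, 0 ≤ x1 i ∧ 0 ≤ x2 i ∧ x1 i + x2 i ≤ 1)
    (hx1 : x1 ≠ 0) (hx2 : x2 ≠ 0)
    (heq1 : ∀ i, -δ i * x1 i + (1 - x1 i - x2 i) * ∑ j, B i j * x1 j = 0)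
    (heq2 : ∀ i, -δ i * x2 i + (1 - x1 i - x2 i) * ∑ j, B i j * x2 j = 0) :
    (∀ i, 0 < x1 i) ∧ (∀ i, 0 < x2 i) ∧
    (∀ z : Fin n → ℝ, (∀ i, z i ∈ Set.Icc (0 : ℝ) 1) → z ≠ 0 →
      (∀ i, -δ i * z i + (1 - z i) * ∑ j, B i j * z j = 0) →
      z = fun i => x1 i + x2 i) ∧
    ∃ α > (0 : ℝ), x1 = α • x2 := by
  have heqy : ∀ i, -δ i * (x1 + x2) i + (1 - (x1 + x2) i) * (B *ᵥ (x1 + x2)) i = 0 :=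
    fun i => by
      simp only [mulVec, dotProduct, Pi.add_apply, mul_add, Finset.sum_add_distrib]
      linear_combination heq1 i + heq2 i
  have hy1 : ∀ i, x1 i + x2 i < 1 := lt_one_of_equilibrium hδ (fun i => (hdom i).2.2) heqy
  have hs : ∀ i, 1 - x1 i - x2 i ≠ 0 := fun i => by linarith [hy1 i]
  have hp1 := pos_of_linear_equilibrium hB hirr hs (fun i => (hdom i).1) hx1 heq1
  have hp2 := pos_of_linear_equilibrium hB hirr hs (fun i => (hdom i).2.1) hx2 heq2
  have hy0 : ∀ i, 0 < (x1 + x2) i := fun i => add_pos (hp1 i) (hp2 i)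
  refine ⟨hp1, hp2, fun z hz hzne heqz => ?_,
    exists_pos_smul_of_linear_equilibrium hB hirr hs hp1 hp2 heq1 heq2⟩
  have hz1 := lt_one_of_equilibrium hδ (fun i => (hz i).2) heqz
  have hzpos := pos_of_linear_equilibrium hB hirr (fun i => (sub_pos.mpr (hz1 i)).ne')
    (fun i => (hz i).1) hzne heqz
  funext i
  exact le_antisymm
    (le_of_equilibrium hB hδ hy0 (fun i => (hdom i).2.2) (fun i => (hz i).1) (fun i => (hz i).2)
      heqy heqz i)
    (le_of_equilibrium hB hδ hzpos (fun i => (hz i).2) (fun i => (hy0 i).le)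
      (fun i => (hdom i).2.2) heqz heqy i)

theorem stmt11 {n : ℕ} (δ : Fin n → ℝ) (B : Matrix (Fin n) (Fin n) ℝ)
    (hδ : ∀ i, 0 < δ i) (hB : ∀ i j, 0 ≤ B i j) (hirr : Irred B)
    (hs : 0 < spA (-(Matrix.diagonal δ) + B))
    (x1 x2 : Fin n → ℝ)
    (hdom : ∀ i, 0 ≤ x1 i ∧ 0 ≤ x2 i ∧ x1 i + x2 i ≤ 1)
    (hx1 : x1 ≠ 0) (hx2 : x2 ≠ 0)
    (heq1 : ∀ i, -δ i * x1 i + (1 - x1 i - x2 i) * ∑ j, B i j * x1 j = 0)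
    (heq2 : ∀ i, -δ i * x2 i + (1 - x1 i - x2 i) * ∑ j, B i j * x2 j = 0) :
    (∀ i, 0 < x1 i) ∧ (∀ i, 0 < x2 i) ∧
    (∀ z : Fin n → ℝ, (∀ i, z i ∈ Set.Icc (0 : ℝ) 1) → z ≠ 0 →
      (∀ i, -δ i * z i + (1 - z i) * ∑ j, B i j * z j = 0) →
      z = fun i => x1 i + x2 i) ∧
    ∃ α > (0 : ℝ), x1 = α • x2 :=
  stmt11_general δ B hδ hB hirr x1 x2 hdom hx1 hx2 heq1 heq2
end

section
/- Let x* be the unique strictly positive equilibrium of the single-virus system ż = (-D+B-ZB)z with δ_i > 0, B irreducible nonnegative, and s(-D+B) > 0. Then the matrix J = -D + B - X*B - diag(Bx*) (where X* = diag(x*)) satisfies s(J) < 0; in particular, J is nonsingular. -/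
open Finset Matrix

namespace Matrix

variable {ι : Type*} [Fintype ι] [DecidableEq ι]

theorem exists_mulVec_eq_smul_of_mem_spectrum {K : Type*} [Field K] {A : Matrix ι ι K} {z : K}
    (hz : z ∈ spectrum K A) : ∃ v ≠ 0, A *ᵥ v = z • v := by
  rw [← spectrum_toLin', ← Module.End.hasEigenvalue_iff_mem_spectrum] at hz
  obtain ⟨v, hv, hv0⟩ := hz.exists_hasEigenvector
  exact ⟨v, hv0, by simpa using Module.End.mem_eigenspace_iff.mp hv⟩

theorem isUnit_det_of_zero_notMem_spectrum {A : Matrix ι ι ℝ}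
    (h : (0 : ℂ) ∉ spectrum ℂ (A.map (fun t : ℝ => (t : ℂ)))) : IsUnit A.det := by
  rw [spectrum.zero_mem_iff, not_not, isUnit_iff_isUnit_det] at h
  have hdet : (A.map (fun t : ℝ => (t : ℂ))).det = (A.det : ℂ) :=
    (Complex.ofRealHom.map_det A).symm
  rw [hdet, isUnit_iff_ne_zero, Complex.ofReal_ne_zero] at h
  exact isUnit_iff_ne_zero.mpr h

def IsMetzler (M : Matrix ι ι ℝ) : Prop :=
  ∀ i j, i ≠ j → 0 ≤ M i j

theorem IsMetzler.exists_re_mul_le_mulVec {M : Matrix ι ι ℝ} (hM : M.IsMetzler)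
    {x : ι → ℝ} (hx : ∀ i, 0 < x i) {z : ℂ} {v : ι → ℂ} (hv : v ≠ 0)
    (hzv : M.map (fun t : ℝ => (t : ℂ)) *ᵥ v = z • v) :
    ∃ i, z.re * x i ≤ (M *ᵥ x) i := by
  obtain ⟨j₀, hj₀⟩ := Function.ne_iff.mp hv
  have : Nonempty ι := ⟨j₀⟩
  obtain ⟨i, hi⟩ := Finite.exists_max (fun j => ‖v j‖ / x j)
  set r := ‖v i‖ / x i
  have hr : 0 < r := (div_pos (norm_pos_iff.mpr hj₀) (hx j₀)).trans_le (hi j₀)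
  have hvi : ‖v i‖ = r * x i := by simp only [r, div_mul_cancel₀ _ (hx i).ne']
  have hv_le (j : ι) : ‖v j‖ ≤ r * x j := (div_le_iff₀ (hx j)).mp (hi j)
  have hoff (j : ι) (hj : j ∈ univ.erase i) : 0 ≤ M i j := hM i j (ne_of_mem_erase hj).symm
  have hrow : (z - M i i) * v i = ∑ j ∈ univ.erase i, M i j * v j := by
    have h := congrFun hzv i
    simp only [mulVec, dotProduct, map_apply, Pi.smul_apply, smul_eq_mul,
      ← add_sum_erase _ _ (mem_univ i)] at h
    linear_combination -h
  have hMx : (M *ᵥ x) i = M i i * x i + ∑ j ∈ univ.erase i, M i j * x j :=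
    (add_sum_erase _ (fun j => M i j * x j) (mem_univ i)).symm
  have hnorm : ‖z - M i i‖ * ‖v i‖ ≤ r * ∑ j ∈ univ.erase i, M i j * x j :=
    calc ‖z - M i i‖ * ‖v i‖ = ‖∑ j ∈ univ.erase i, (M i j : ℂ) * v j‖ := by
          rw [← norm_mul, hrow]
      _ ≤ ∑ j ∈ univ.erase i, M i j * ‖v j‖ := by
          refine (norm_sum_le _ _).trans (sum_le_sum fun j hj => ?_)
          rw [norm_mul, Complex.norm_real, Real.norm_of_nonneg (hoff j hj)]
      _ ≤ ∑ j ∈ univ.erase i, M i j * (r * x j) :=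
          sum_le_sum fun j hj => mul_le_mul_of_nonneg_left (hv_le j) (hoff j hj)
      _ = r * ∑ j ∈ univ.erase i, M i j * x j := by
          rw [mul_sum]; exact sum_congr rfl fun j _ => by ring
  have hre : z.re - M i i ≤ ‖z - M i i‖ := by
    simpa using Complex.re_le_norm (z - M i i)
  refine ⟨i, le_of_mul_le_mul_left ?_ hr⟩
  rw [hvi] at hnorm
  nlinarith [mul_le_mul_of_nonneg_right hre (mul_pos hr (hx i)).le]

theorem IsMetzler.re_lt_of_mulVec_lt {M : Matrix ι ι ℝ} (hM : M.IsMetzler)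
    {x : ι → ℝ} (hx : ∀ i, 0 < x i) {c : ℝ} (hc : ∀ i, (M *ᵥ x) i < c * x i) {z : ℂ}
    (hz : z ∈ spectrum ℂ (M.map (fun t : ℝ => (t : ℂ)))) : z.re < c := by
  obtain ⟨v, hv, hzv⟩ := exists_mulVec_eq_smul_of_mem_spectrum hz
  obtain ⟨i, hi⟩ := hM.exists_re_mul_le_mulVec hx hv hzv
  exact lt_of_mul_lt_mul_right (hi.trans_lt (hc i)) (hx i).le

end Matrix

theorem spA_fin_zero (M : Matrix (Fin 0) (Fin 0) ℝ) : spA M = 0 := by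
  simp [spA, spectrum.of_subsingleton]

theorem spA_lt_of_forall_re_lt {n : ℕ} [NeZero n] {M : Matrix (Fin n) (Fin n) ℝ} {c : ℝ}
    (h : ∀ z ∈ spectrum ℂ (M.map (fun t : ℝ => (t : ℂ))), z.re < c) : spA M < c := by
  set A := M.map (fun t : ℝ => (t : ℂ))
  have hne : ((fun z : ℂ => z.re) '' spectrum ℂ A).Nonempty :=
    (spectrum.nonempty_of_isAlgClosed_of_finiteDimensional ℂ A).image _
  obtain ⟨z, hz, hsup⟩ := hne.csSup_mem (A.finite_spectrum.image _)
  rw [spA, ← hsup]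
  exact h z hz

section Equilibrium

variable {ι : Type*} [Fintype ι] {δ x : ι → ℝ} {B : Matrix ι ι ℝ}

theorem mulVec_pos_of_equilibrium (hδ : ∀ i, 0 < δ i) (hx : ∀ i, 0 < x i ∧ x i < 1)
    (heq : ∀ i, -δ i * x i + (1 - x i) * ∑ j, B i j * x j = 0) (i : ι) :
    0 < (B *ᵥ x) i := by
  have h := heq i
  obtain ⟨hx₀, hx₁⟩ := hx i
  change 0 < ∑ j, B i j * x j
  nlinarith [mul_pos (hδ i) hx₀]

theorem mulVec_jacobian_of_equilibrium [DecidableEq ι]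
    (heq : ∀ i, -δ i * x i + (1 - x i) * ∑ j, B i j * x j = 0) (i : ι) :
    ((-(diagonal δ) + B - diagonal x * B - diagonal (B *ᵥ x)) *ᵥ x) i
      = -((B *ᵥ x) i * x i) := by
  simp only [sub_mulVec, add_mulVec, neg_mulVec, ← mulVec_mulVec, Pi.sub_apply, Pi.add_apply,
    Pi.neg_apply, mulVec_diagonal]
  have h := heq i
  change -δ i * x i + (1 - x i) * (B *ᵥ x) i = 0 at h
  linarith

theorem isMetzler_jacobian [DecidableEq ι] (hB : ∀ i j, 0 ≤ B i j) (hx : ∀ i, x i < 1) :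
    (-(diagonal δ) + B - diagonal x * B - diagonal (B *ᵥ x)).IsMetzler := by
  intro i j hij
  simp only [Matrix.sub_apply, Matrix.add_apply, Matrix.neg_apply, diagonal_apply_ne _ hij,
    diagonal_mul]
  nlinarith [hB i j, hx i]

end Equilibrium

theorem stmt12_general {n : ℕ} (δ : Fin n → ℝ) (B : Matrix (Fin n) (Fin n) ℝ)
    (hδ : ∀ i, 0 < δ i) (hB : ∀ i j, 0 ≤ B i j)
    (hs : 0 < spA (-(Matrix.diagonal δ) + B))
    (x : Fin n → ℝ) (hx : ∀ i, 0 < x i ∧ x i < 1)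
    (heq : ∀ i, -δ i * x i + (1 - x i) * ∑ j, B i j * x j = 0)
    (J : Matrix (Fin n) (Fin n) ℝ)
    (hJ : J = -(Matrix.diagonal δ) + B - Matrix.diagonal x * B
        - Matrix.diagonal (B.mulVec x)) :
    spA J < 0 ∧ IsUnit J.det := by
  have : NeZero n := ⟨by rintro rfl; exact (spA_fin_zero _ ▸ hs).false⟩
  have hJx (i : Fin n) : (J *ᵥ x) i < 0 * x i := by
    rw [hJ, mulVec_jacobian_of_equilibrium heq, zero_mul, neg_lt_zero]
    exact mul_pos (mulVec_pos_of_equilibrium hδ hx heq i) (hx i).1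
  have hJ_metzler : J.IsMetzler := hJ ▸ isMetzler_jacobian hB fun i => (hx i).2
  have hre (z : ℂ) (hz : z ∈ spectrum ℂ (J.map (fun t : ℝ => (t : ℂ)))) : z.re < 0 :=
    hJ_metzler.re_lt_of_mulVec_lt (fun i => (hx i).1) hJx hz
  exact ⟨spA_lt_of_forall_re_lt hre,
    Matrix.isUnit_det_of_zero_notMem_spectrum fun h0 => (hre 0 h0).false⟩

theorem stmt12 {n : ℕ} (δ : Fin n → ℝ) (B : Matrix (Fin n) (Fin n) ℝ)
    (hδ : ∀ i, 0 < δ i) (hB : ∀ i j, 0 ≤ B i j) (hirr : Irred B)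
    (hs : 0 < spA (-(Matrix.diagonal δ) + B))
    (x : Fin n → ℝ) (hx : ∀ i, 0 < x i ∧ x i < 1)
    (heq : ∀ i, -δ i * x i + (1 - x i) * ∑ j, B i j * x j = 0)
    (J : Matrix (Fin n) (Fin n) ℝ)
    (hJ : J = -(Matrix.diagonal δ) + B - Matrix.diagonal x * B
        - Matrix.diagonal (B.mulVec x)) :
    spA J < 0 ∧ IsUnit J.det :=
  stmt12_general δ B hδ hB hs x hx heq J hJ
end

section
/- Suppose the bi-virus Jacobian is evaluated at a coexistence equilibrium (x̃¹, x̃²) of the homogeneous model with δ¹/β¹ = δ²/β² and x̃¹ = α x̃² ≫ 0. Then the vector (x̃¹, -x̃¹) ∈ R^{2n} is in the kernel of the Jacobian, i.e., the Jacobian has a zero eigenvalue. -/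
/-
At the equilibrium the off-diagonal blocks of the Jacobian cancel the `-diag(Bᵏx̃ᵏ)` terms of the
diagonal blocks along `(x̃¹, -x̃¹)`, leaving `βᵏ (I - X̃¹ - X̃²) A x̃¹ - δᵏ x̃¹` in block `k`.
Both vanish by the equilibrium equation for `x̃¹`, since `δ¹/β¹ = δ²/β²`.
-/

open Matrix

theorem Matrix.fromBlocks_sub_neg_mulVec_sum_elim_neg {n R : Type*} [Fintype n] [Ring R]
    (P Q D E : Matrix n n R) (x : n → R) :
    fromBlocks (P - D) (-D) (-E) (Q - E) *ᵥ Sum.elim x (-x) = Sum.elim (P *ᵥ x) (-(Q *ᵥ x)) := by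
  rw [fromBlocks_mulVec, Sum.elim_comp_inl, Sum.elim_comp_inr]
  simp only [sub_mulVec, neg_mulVec, mulVec_neg]
  congr 1 <;> abel

theorem Matrix.smul_sub_smul_one_mulVec_eq_zero {n K : Type*} [Fintype n] [DecidableEq n]
    [Field K] {M : Matrix n n K} {x : n → K} {β δ : K} (hβ : β ≠ 0)
    (h : M *ᵥ x = (δ / β) • x) : (β • M - δ • 1) *ᵥ x = 0 := by
  rw [sub_mulVec, smul_mulVec, h, smul_smul, mul_div_cancel₀ δ hβ, smul_mulVec, one_mulVec,
    sub_self]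

theorem stmt17_general {n : ℕ} (A : Matrix (Fin n) (Fin n) ℝ)
    (δ1 δ2 β1 β2 : ℝ) (hβ1 : 0 < β1) (hβ2 : 0 < β2)
    (hratio : δ1 / β1 = δ2 / β2)
    (x1 x2 : Fin n → ℝ)
    (heig1 : ((1 - Matrix.diagonal x1 - Matrix.diagonal x2) * A).mulVec x1
        = (δ1 / β1) • x1)
    (J : Matrix (Fin n ⊕ Fin n) (Fin n ⊕ Fin n) ℝ)
    (hJ : J = Matrix.fromBlocks
      ((1 - Matrix.diagonal x1 - Matrix.diagonal x2) * (β1 • A) - δ1 • 1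
          - Matrix.diagonal ((β1 • A).mulVec x1))
      (-Matrix.diagonal ((β1 • A).mulVec x1))
      (-Matrix.diagonal ((β2 • A).mulVec x2))
      ((1 - Matrix.diagonal x1 - Matrix.diagonal x2) * (β2 • A) - δ2 • 1
          - Matrix.diagonal ((β2 • A).mulVec x2))) :
    J.mulVec (Sum.elim x1 (fun i => -x1 i)) = 0 := by
  have heig1' : ((1 - diagonal x1 - diagonal x2) * A) *ᵥ x1 = (δ2 / β2) • x1 := hratio ▸ heig1
  have hblock1 := smul_sub_smul_one_mulVec_eq_zero hβ1.ne' heig1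
  have hblock2 := smul_sub_smul_one_mulVec_eq_zero hβ2.ne' heig1'
  rw [hJ, Matrix.mul_smul, Matrix.mul_smul, show (fun i => -x1 i) = -x1 from rfl,
    fromBlocks_sub_neg_mulVec_sum_elim_neg, hblock1, hblock2,
    neg_zero, Sum.elim_zero_zero]

theorem stmt17 {n : ℕ} (A : Matrix (Fin n) (Fin n) ℝ)
    (hA : ∀ i j, 0 ≤ A i j) (hirr : Irred A)
    (δ1 δ2 β1 β2 : ℝ) (hδ1 : 0 < δ1) (hδ2 : 0 < δ2) (hβ1 : 0 < β1) (hβ2 : 0 < β2)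
    (hratio : δ1 / β1 = δ2 / β2)
    (x1 x2 : Fin n → ℝ) (hx1pos : ∀ i, 0 < x1 i)
    (α : ℝ) (hα : 0 < α) (hprop : x1 = α • x2)
    (heig1 : ((1 - Matrix.diagonal x1 - Matrix.diagonal x2) * A).mulVec x1
        = (δ1 / β1) • x1)
    (heig2 : ((1 - Matrix.diagonal x1 - Matrix.diagonal x2) * A).mulVec x2
        = (δ2 / β2) • x2)
    (J : Matrix (Fin n ⊕ Fin n) (Fin n ⊕ Fin n) ℝ)
    (hJ : J = Matrix.fromBlocks
      ((1 - Matrix.diagonal x1 - Matrix.diagonal x2) * (β1 • A) - δ1 • 1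
          - Matrix.diagonal ((β1 • A).mulVec x1))
      (-Matrix.diagonal ((β1 • A).mulVec x1))
      (-Matrix.diagonal ((β2 • A).mulVec x2))
      ((1 - Matrix.diagonal x1 - Matrix.diagonal x2) * (β2 • A) - δ2 • 1
          - Matrix.diagonal ((β2 • A).mulVec x2))) :
    J.mulVec (Sum.elim x1 (fun i => -x1 i)) = 0 :=
  stmt17_general A δ1 δ2 β1 β2 hβ1 hβ2 hratio x1 x2 heig1 J hJ
end

section
/- Let M be an irreducible Metzler n×n matrix with s(M) = 0, and let P be a positive diagonal matrix such that Q = M'P + PM is negative semidefinite. Then for every nonzero x ≥ 0 that has at least one zero entry, x'Qx < 0. -/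
/-!
Since `Q` is symmetric and negative semidefinite, `xᵀ Q x = 0` forces `Q x = 0`. For a Metzler
`Q` and `x ≥ 0`, the equation `(Q x) i = 0` at a zero entry `x i = 0` is a sum of nonnegative
terms, so `x j = 0` whenever `Q i j > 0`, in particular whenever `M i j > 0`. Irreducibility of
`M` then spreads the zero entry to all of `x`.
-/

open Matrix

section

variable {ι : Type*} [Fintype ι]

theorem Matrix.mulVec_eq_zero_of_dotProduct_mulVec_eq_zero {Q : Matrix ι ι ℝ} (hQ : Q.IsSymm)
    (hnsd : ∀ v, v ⬝ᵥ Q *ᵥ v ≤ 0) {x : ι → ℝ} (hx : x ⬝ᵥ Q *ᵥ x = 0) : Q *ᵥ x = 0 := by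
  have hpsd : (-Q).PosSemidef :=
    .of_dotProduct_mulVec_nonneg (isHermitian_iff_isSymm.mpr hQ.neg) fun v => by
      simpa [neg_mulVec] using hnsd v
  simpa [neg_mulVec, hx] using (hpsd.dotProduct_mulVec_zero_iff x).mp

theorem Matrix.isSymm_transpose_mul_diagonal_add {R : Type*} [CommSemiring R] [DecidableEq ι]
    (M : Matrix ι ι R) (p : ι → R) :
    (Mᵀ * diagonal p + diagonal p * M).IsSymm := by
  simp [IsSymm, transpose_add, transpose_mul, add_comm]

theorem Matrix.transpose_mul_diagonal_add_apply {R : Type*} [CommSemiring R] [DecidableEq ι]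
    (M : Matrix ι ι R) (p : ι → R) (i j : ι) :
    (Mᵀ * diagonal p + diagonal p * M) i j = M j i * p j + p i * M i j := by
  simp [mul_diagonal, diagonal_mul]

theorem Matrix.eq_zero_of_mulVec_apply_eq_zero {Q : Matrix ι ι ℝ}
    (hQ : ∀ i j, i ≠ j → 0 ≤ Q i j) {x : ι → ℝ} (hx : ∀ i, 0 ≤ x i) {i j : ι}
    (hxi : x i = 0) (hQx : (Q *ᵥ x) i = 0) (hQij : 0 < Q i j) : x j = 0 := by
  have hterm : ∀ k ∈ Finset.univ, 0 ≤ Q i k * x k := fun k _ => by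
    rcases eq_or_ne i k with rfl | hik
    · simp [hxi]
    · exact mul_nonneg (hQ i k hik) (hx k)
  have := (Finset.sum_eq_zero_iff_of_nonneg hterm).mp hQx j (Finset.mem_univ j)
  exact (mul_eq_zero.mp this).resolve_left hQij.ne'

end

theorem Irred.forall_of_closed_s18 {n : ℕ} {M : Matrix (Fin n) (Fin n) ℝ} (hM : Irred M)
    {S : Fin n → Prop} (hS : ∀ i j, i ≠ j → S i → 0 < M i j → S j) {i₀ : Fin n} (h₀ : S i₀)
    (j : Fin n) : S j := by
  obtain ⟨m, c, rfl, hcm, hpath⟩ := hM i₀ j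
  suffices ∀ k ≤ m, S (c k) from this 0 m.zero_le
  intro k hk
  induction hk using Nat.decreasingInduction with
  | self => exact hcm ▸ h₀
  | of_succ k hk ih =>
    by_cases hc : c (k + 1) = c k
    · exact hc ▸ ih
    · exact hS _ _ hc ih (hpath k hk)

theorem stmt18_general {n : ℕ} (M : Matrix (Fin n) (Fin n) ℝ)
    (hMetz : ∀ i j, i ≠ j → 0 ≤ M i j) (hirr : Irred M)
    (P : Fin n → ℝ) (hP : ∀ i, 0 < P i)
    (Q : Matrix (Fin n) (Fin n) ℝ)
    (hQ : Q = M.transpose * Matrix.diagonal P + Matrix.diagonal P * M)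
    (hnsd : ∀ v : Fin n → ℝ, dotProduct v (Q.mulVec v) ≤ 0) :
    ∀ x : Fin n → ℝ, (∀ i, 0 ≤ x i) → x ≠ 0 → (∃ i, x i = 0) →
      dotProduct x (Q.mulVec x) < 0 := by
  rintro x hx hx_ne ⟨i₀, hi₀⟩
  refine (hnsd x).lt_of_ne fun hxQx => hx_ne ?_
  have hker : Q *ᵥ x = 0 := mulVec_eq_zero_of_dotProduct_mulVec_eq_zero
    (hQ ▸ isSymm_transpose_mul_diagonal_add M P) hnsd hxQx
  have hQ_nonneg : ∀ i j, i ≠ j → 0 ≤ Q i j := fun i j hij => by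
    rw [hQ, transpose_mul_diagonal_add_apply]
    exact add_nonneg (mul_nonneg (hMetz j i hij.symm) (hP j).le)
      (mul_nonneg (hP i).le (hMetz i j hij))
  have hQ_pos : ∀ i j, i ≠ j → 0 < M i j → 0 < Q i j := fun i j hij hMij => by
    rw [hQ, transpose_mul_diagonal_add_apply]
    exact add_pos_of_nonneg_of_pos (mul_nonneg (hMetz j i hij.symm) (hP j).le)
      (mul_pos (hP i) hMij)
  funext j
  exact hirr.forall_of_closed_s18 (S := (x · = 0)) (fun i k hik hxi hMik =>
    eq_zero_of_mulVec_apply_eq_zero hQ_nonneg hx hxi (congrFun hker i)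
      (hQ_pos i k hik hMik)) hi₀ j

theorem stmt18 {n : ℕ} (M : Matrix (Fin n) (Fin n) ℝ)
    (hMetz : ∀ i j, i ≠ j → 0 ≤ M i j) (hirr : Irred M) (hs : spA M = 0)
    (P : Fin n → ℝ) (hP : ∀ i, 0 < P i)
    (Q : Matrix (Fin n) (Fin n) ℝ)
    (hQ : Q = M.transpose * Matrix.diagonal P + Matrix.diagonal P * M)
    (hnsd : ∀ v : Fin n → ℝ, dotProduct v (Q.mulVec v) ≤ 0) :
    ∀ x : Fin n → ℝ, (∀ i, 0 ≤ x i) → x ≠ 0 → (∃ i, x i = 0) →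
      dotProduct x (Q.mulVec x) < 0 :=
  stmt18_general M hMetz hirr P hP Q hQ hnsd
end
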